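/- (Principle of maximum guessed quantum work, composite-state form.) The one-time-measurement average of the guessed quantum work satisfies Σ_i (exp(−β ε_i)/Z_S0)·W̃(i) ≥ ΔF_S + β⁻¹·D. -/

import Mathlib

open Matrix Kronecker BigOperators Finset

noncomputable section

/-- Partial trace over the bath (second tensor factor). -/
def ptraceB {n m : ℕ} (X : Matrix (Fin n × Fin m) (Fin n × Fin m) ℂ) :
    Matrix (Fin n) (Fin n) ℂ :=
  Matrix.of fun i i' => ∑ j, X (i, j) (i', j)

/-- Outer product `|v⟩⟨v|`. -/
def outer {k : ℕ} (v : Fin k → ℂ) : Matrix (Fin k) (Fin k) ℂ :=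
  Matrix.vecMulVec v (star v)

/-- Partition function `Z = Tr exp (−β H)` (real part of the trace). -/
def Zpart (β : ℝ) {k : ℕ} (H : Matrix (Fin k) (Fin k) ℂ) : ℝ :=
  (NormedSpace.exp ((-β) • H)).trace.re

/-- Gibbs state `exp (−β H) / Z`. -/
def gibbs (β : ℝ) {k : ℕ} (H : Matrix (Fin k) (Fin k) ℂ) : Matrix (Fin k) (Fin k) ℂ :=
  ((Zpart β H : ℂ)⁻¹) • NormedSpace.exp ((-β) • H)

/-- The channel `Φ(ρ) = Tr_B [U (ρ ⊗ τB) U†]`. -/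
def channel {n m : ℕ} (U : Matrix (Fin n × Fin m) (Fin n × Fin m) ℂ)
    (τB : Matrix (Fin m) (Fin m) ℂ) (ρ : Matrix (Fin n) (Fin n) ℂ) :
    Matrix (Fin n) (Fin n) ℂ :=
  ptraceB (U * (ρ ⊗ₖ τB) * Uᴴ)

/-!
Write `g` for the Gibbs distribution of `H_S0` and `p = softmax (−βE)` for the guessed one. The
spectrum of `Θ` is the product distribution `p ⊗ τ_B` and its system energy is `∑ p(i) E(i)`, so the
bath energies cancel and `D = ln Z_St − ln Z̃ − β Q̃`. The claim thus reduces to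
`⟨E − ε⟩_g ≥ β⁻¹ ln (Z_S0 / Z̃)`, which is Jensen's inequality for `exp`:
`Z̃ / Z_S0 = ∑ g(i) exp (−β (E(i) − ε(i))) ≥ exp (−β ⟨E − ε⟩_g)`.
-/

section Softmax

variable {ι : Type*} [Fintype ι]

def softmax (x : ι → ℝ) (i : ι) : ℝ :=
  Real.exp (x i) / ∑ j, Real.exp (x j)

variable [Nonempty ι] (x : ι → ℝ)

lemma sum_exp_pos : 0 < ∑ j, Real.exp (x j) :=
  Finset.sum_pos (fun j _ => Real.exp_pos (x j)) Finset.univ_nonempty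

lemma softmax_pos (i : ι) : 0 < softmax x i :=
  div_pos (Real.exp_pos _) (sum_exp_pos x)

lemma sum_softmax : ∑ i, softmax x i = 1 := by
  simp only [softmax]
  rw [← Finset.sum_div, div_self (sum_exp_pos x).ne']

lemma log_softmax (i : ι) : Real.log (softmax x i) = x i - Real.log (∑ j, Real.exp (x j)) := by
  rw [softmax, Real.log_div (Real.exp_ne_zero _) (sum_exp_pos x).ne', Real.log_exp]

lemma sum_softmax_mul_log_softmax :
    ∑ i, softmax x i * Real.log (softmax x i)
      = ∑ i, softmax x i * x i - Real.log (∑ j, Real.exp (x j)) := by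
  simp only [log_softmax, mul_sub, Finset.sum_sub_distrib, ← Finset.sum_mul, sum_softmax, one_mul]

/-- Gibbs' variational inequality, from Jensen's inequality for `exp` with the weights
`softmax x`. -/
lemma log_sum_exp_sub_log_sum_exp_le (y : ι → ℝ) :
    Real.log (∑ j, Real.exp (x j)) - Real.log (∑ j, Real.exp (y j))
      ≤ ∑ i, softmax x i * (x i - y i) := by
  have hjensen := convexOn_exp.map_sum_le (t := Finset.univ) (w := softmax x)
    (p := fun i => y i - x i) (fun i _ => (softmax_pos x i).le) (sum_softmax x)
    (fun i _ => Set.mem_univ _)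
  have hrhs : ∑ i, softmax x i • Real.exp (y i - x i)
      = (∑ j, Real.exp (y j)) / ∑ j, Real.exp (x j) := by
    rw [Finset.sum_div]
    refine Finset.sum_congr rfl fun i _ => ?_
    rw [softmax, smul_eq_mul, Real.exp_sub]
    field_simp
  rw [hrhs] at hjensen
  have hlog := Real.log_le_log (Real.exp_pos _) hjensen
  rw [Real.log_exp, Real.log_div (sum_exp_pos y).ne' (sum_exp_pos x).ne'] at hlog
  simp only [smul_eq_mul, mul_sub, Finset.sum_sub_distrib] at hlog ⊢
  linarith

lemma inv_mul_log_sum_exp_sub_le {β : ℝ} (hβ : 0 < β) (ε E : ι → ℝ) :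
    β⁻¹ * (Real.log (∑ j, Real.exp (-(β * ε j))) - Real.log (∑ j, Real.exp (-(β * E j))))
      ≤ ∑ i, softmax (fun i => -(β * ε i)) i * (E i - ε i) := by
  rw [inv_mul_le_iff₀ hβ, Finset.mul_sum]
  exact (log_sum_exp_sub_log_sum_exp_le _ _).trans_eq (Finset.sum_congr rfl fun i _ => by ring)

end Softmax

lemma sum_sum_mul_mul_log_mul {ι κ : Type*} [Fintype ι] [Fintype κ] (a : ι → ℝ) (b : κ → ℝ)
    (ha : ∑ i, a i = 1) (hb : ∑ j, b j = 1) :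
    ∑ i, ∑ j, a i * b j * Real.log (a i * b j)
      = ∑ i, a i * Real.log (a i) + ∑ j, b j * Real.log (b j) := by
  have hsplit : ∀ i j, a i * b j * Real.log (a i * b j)
      = b j * (a i * Real.log (a i)) + a i * (b j * Real.log (b j)) := by
    intro i j
    have h := Real.negMulLog_mul (a i) (b j)
    simp only [Real.negMulLog] at h
    linarith
  simp only [hsplit, Finset.sum_add_distrib, ← Finset.sum_mul, ← Finset.mul_sum, ha, hb, one_mul]

section Spectral

variable {ι : Type*} [Fintype ι] [DecidableEq ι]

lemma conjTranspose_mul_self_of_orthonormal {e : ι → ι → ℂ}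
    (he : ∀ i i', ∑ x, (starRingEnd ℂ) (e i x) * e i' x = if i = i' then 1 else 0) :
    (of e)ᵀᴴ * (of e)ᵀ = 1 := by
  ext i i'
  simpa [mul_apply, one_apply] using he i i'

lemma eq_mul_diagonal_mul_conjTranspose_of_eigenvectors {H : Matrix ι ι ℂ} {e : ι → ι → ℂ}
    {ε : ι → ℝ} (he : ∀ i i', ∑ x, (starRingEnd ℂ) (e i x) * e i' x = if i = i' then 1 else 0)
    (heig : ∀ i, H *ᵥ e i = (ε i : ℂ) • e i) :
    H = (of e)ᵀ * diagonal (fun i => (ε i : ℂ)) * (of e)ᵀᴴ := by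
  have hHP : H * (of e)ᵀ = (of e)ᵀ * diagonal (fun i => (ε i : ℂ)) := by
    ext x i
    rw [mul_diagonal]
    simpa [mul_apply, mulVec, dotProduct, mul_comm] using congrFun (heig i) x
  rw [← hHP, mul_assoc, mul_eq_one_comm.mp (conjTranspose_mul_self_of_orthonormal he), mul_one]

lemma trace_mul_mul_conjTranspose {P : Matrix ι ι ℂ} (hP : Pᴴ * P = 1) (A : Matrix ι ι ℂ) :
    (P * A * Pᴴ).trace = A.trace := by
  rw [trace_mul_cycle, hP, one_mul]

lemma exp_smul_conj_diagonal {P : Matrix ι ι ℂ} (hP : Pᴴ * P = 1) (d : ι → ℝ) (t : ℝ) :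
    NormedSpace.exp (t • (P * diagonal (fun i => (d i : ℂ)) * Pᴴ))
      = P * diagonal (fun i => (Real.exp (t * d i) : ℂ)) * Pᴴ := by
  have hconj := exp_units_conj ⟨P, Pᴴ, mul_eq_one_comm.mp hP, hP⟩ (t • diagonal fun i => (d i : ℂ))
  rw [Units.inv_mk, Matrix.mul_smul, Matrix.smul_mul] at hconj
  rw [hconj, ← diagonal_smul, exp_diagonal]
  congr
  ext i
  simp [Complex.exp_eq_exp_ℂ]

section PartitionFunction

variable {k : ℕ} {H P : Matrix (Fin k) (Fin k) ℂ} {d : Fin k → ℝ}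

lemma Zpart_eq_sum_of_eq_conj_diagonal (hP : Pᴴ * P = 1)
    (hH : H = P * diagonal (fun i => (d i : ℂ)) * Pᴴ) (β : ℝ) :
    Zpart β H = ∑ i, Real.exp (-(β * d i)) := by
  rw [hH, Zpart, exp_smul_conj_diagonal hP, trace_mul_mul_conjTranspose hP, trace_diagonal,
    Complex.re_sum]
  simp only [Complex.ofReal_re, neg_mul]

lemma re_trace_mul_gibbs_of_eq_conj_diagonal (hP : Pᴴ * P = 1)
    (hH : H = P * diagonal (fun i => (d i : ℂ)) * Pᴴ) (β : ℝ) :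
    (H * gibbs β H).trace.re = ∑ i, softmax (fun i => -(β * d i)) i * d i := by
  have hprod : P * diagonal (fun i => (d i : ℂ)) * Pᴴ
        * (P * diagonal (fun i => (Real.exp (-β * d i) : ℂ)) * Pᴴ)
      = P * diagonal (fun i => ((d i * Real.exp (-β * d i) : ℝ) : ℂ)) * Pᴴ := by
    simp only [Matrix.mul_assoc]
    rw [← Matrix.mul_assoc Pᴴ P, hP, Matrix.one_mul, ← Matrix.mul_assoc (diagonal _),
      diagonal_mul_diagonal]
    push_cast
    rfl
  rw [gibbs, Zpart_eq_sum_of_eq_conj_diagonal hP hH, hH, Matrix.mul_smul,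
    exp_smul_conj_diagonal hP, hprod, trace_smul, trace_mul_mul_conjTranspose hP,
    trace_diagonal, smul_eq_mul,
    ← Complex.ofReal_inv, Complex.re_ofReal_mul, Complex.re_sum, Finset.mul_sum]
  refine Finset.sum_congr rfl fun i _ => ?_
  rw [Complex.ofReal_re, softmax, neg_mul]
  ring

lemma Zpart_pos_of_isHermitian [Nonempty (Fin k)] (hH : H.IsHermitian) (β : ℝ) :
    0 < Zpart β H := by
  have hU := Unitary.coe_star_mul_self hH.eigenvectorUnitary
  rw [star_eq_conjTranspose] at hU
  have hdiag := hH.spectral_theorem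
  rw [Unitary.conjStarAlgAut_apply, star_eq_conjTranspose] at hdiag
  exact (Zpart_eq_sum_of_eq_conj_diagonal hU hdiag β).symm ▸ sum_exp_pos _

end PartitionFunction

section Eigenbasis

variable {k : ℕ} {H : Matrix (Fin k) (Fin k) ℂ} {e : Fin k → Fin k → ℂ} {ε : Fin k → ℝ}

lemma Zpart_eq_sum_of_eigenvectors
    (he : ∀ i i', ∑ x, (starRingEnd ℂ) (e i x) * e i' x = if i = i' then 1 else 0)
    (heig : ∀ i, H *ᵥ e i = (ε i : ℂ) • e i) (β : ℝ) :
    Zpart β H = ∑ i, Real.exp (-(β * ε i)) :=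
  Zpart_eq_sum_of_eq_conj_diagonal (conjTranspose_mul_self_of_orthonormal he)
    (eq_mul_diagonal_mul_conjTranspose_of_eigenvectors he heig) β

lemma re_trace_mul_gibbs_of_eigenvectors
    (he : ∀ i i', ∑ x, (starRingEnd ℂ) (e i x) * e i' x = if i = i' then 1 else 0)
    (heig : ∀ i, H *ᵥ e i = (ε i : ℂ) • e i) (β : ℝ) :
    (H * gibbs β H).trace.re = ∑ i, softmax (fun i => -(β * ε i)) i * ε i :=
  re_trace_mul_gibbs_of_eq_conj_diagonal (conjTranspose_mul_self_of_orthonormal he)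
    (eq_mul_diagonal_mul_conjTranspose_of_eigenvectors he heig) β

end Eigenbasis

end Spectral

lemma trace_kronecker_one_mul {n m : ℕ} (A : Matrix (Fin n) (Fin n) ℂ)
    (X : Matrix (Fin n × Fin m) (Fin n × Fin m) ℂ) :
    ((A ⊗ₖ (1 : Matrix (Fin m) (Fin m) ℂ)) * X).trace = (A * ptraceB X).trace := by
  simp only [trace, Matrix.diag, mul_apply, kroneckerMap_apply, one_apply, Fintype.sum_prod_type,
    ptraceB, of_apply, mul_ite, mul_one, mul_zero, ite_mul, zero_mul, Finset.sum_ite_eq,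
    Finset.mem_univ, if_true, Finset.mul_sum]
  exact Finset.sum_congr rfl fun i _ => Finset.sum_comm

lemma trace_kronecker_one_mul_sum_smul {n m : ℕ} {ι : Type*} [Fintype ι]
    (A : Matrix (Fin n) (Fin n) ℂ) (U : Matrix (Fin n × Fin m) (Fin n × Fin m) ℂ)
    (τ : Matrix (Fin m) (Fin m) ℂ) (ρ : ι → Matrix (Fin n) (Fin n) ℂ) (w : ι → ℂ) :
    ((A ⊗ₖ (1 : Matrix (Fin m) (Fin m) ℂ)) * ∑ i, w i • (U * (ρ i ⊗ₖ τ) * Uᴴ)).trace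
      = ∑ i, w i * (A * channel U τ (ρ i)).trace := by
  simp only [Finset.mul_sum, trace_sum, Matrix.mul_smul, trace_smul, smul_eq_mul,
    trace_kronecker_one_mul, channel]

theorem max_guessed_work_composite_general
    (n m : ℕ) (hn : 1 ≤ n) (hm : 1 ≤ m)
    (β : ℝ) (hβ : 0 < β)
    (HS0 HSt : Matrix (Fin n) (Fin n) ℂ)
    (hHSt : HSt.IsHermitian)
    (HB : Matrix (Fin m) (Fin m) ℂ)
    (e : Fin n → Fin n → ℂ) (ε : Fin n → ℝ)
    (he : ∀ i i', ∑ x, (starRingEnd ℂ) (e i x) * e i' x = if i = i' then 1 else 0)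
    (heig : ∀ i, HS0 *ᵥ e i = (ε i : ℂ) • e i)
    (f : Fin m → Fin m → ℂ) (q : Fin m → ℝ)
    (hf : ∀ j j', ∑ x, (starRingEnd ℂ) (f j x) * f j' x = if j = j' then 1 else 0)
    (hfeig : ∀ j, HB *ᵥ f j = (q j : ℂ) • f j)
    (U : Matrix (Fin n × Fin m) (Fin n × Fin m) ℂ)
    (E : Fin n → ℝ)
    (hE : ∀ i, E i = ((HSt * channel U (gibbs β HB) (outer (e i))).trace).re)
    (Zt : ℝ) (hZt : Zt = ∑ i, Real.exp (-(β * E i)))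
    (p : Fin n → ℝ) (hp : ∀ i, p i = Real.exp (-(β * E i)) / Zt)
    (Θ : Matrix (Fin n × Fin m) (Fin n × Fin m) ℂ)
    (hΘ : Θ = ∑ i, (p i : ℂ) • (U * (outer (e i) ⊗ₖ gibbs β HB) * Uᴴ))
    (lam : Fin n → Fin m → ℝ)
    (hlam : ∀ i j, lam i j = p i * Real.exp (-(β * q j)) / Zpart β HB)
    (Qg : ℝ)
    (hQg : Qg = ((HB * gibbs β HB).trace).re
      - ((((1 : Matrix (Fin n) (Fin n) ℂ) ⊗ₖ HB) * Θ).trace).re)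
    (Wg : Fin n → ℝ) (hWg : ∀ i, Wg i = (E i - ε i) - Qg)
    (D : ℝ)
    (hD : D = (∑ i, ∑ j, lam i j * Real.log (lam i j))
      + β * (((HSt ⊗ₖ (1 : Matrix (Fin m) (Fin m) ℂ)) * Θ).trace).re
      + β * ((((1 : Matrix (Fin n) (Fin n) ℂ) ⊗ₖ HB) * Θ).trace).re
      + Real.log (Zpart β HSt * Zpart β HB))
    (ΔF : ℝ) (hΔF : ΔF = -(β⁻¹ * Real.log (Zpart β HSt / Zpart β HS0))) :
    ∑ i, (Real.exp (-(β * ε i)) / Zpart β HS0) * Wg i ≥ ΔF + β⁻¹ * D := by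
  have : Nonempty (Fin n) := Fin.pos_iff_nonempty.mp hn
  have : Nonempty (Fin m) := Fin.pos_iff_nonempty.mp hm
  have hZ0 := Zpart_eq_sum_of_eigenvectors he heig β
  have hZB := Zpart_eq_sum_of_eigenvectors hf hfeig β
  have hZStpos := Zpart_pos_of_isHermitian hHSt β
  have hp' : p = softmax fun i => -(β * E i) := funext fun i => by rw [hp, hZt]; rfl
  have hlam' : ∀ i j, lam i j = p i * softmax (fun j => -(β * q j)) j :=
    fun i j => by rw [hlam, hZB, mul_div_assoc]; rfl
  have hsys : (((HSt ⊗ₖ (1 : Matrix (Fin m) (Fin m) ℂ)) * Θ).trace).re = ∑ i, p i * E i := by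
    simp only [hΘ, trace_kronecker_one_mul_sum_smul, Complex.re_sum, Complex.re_ofReal_mul, hE]
  have hD' : D = Real.log (Zpart β HSt) - Real.log Zt - β * Qg := by
    simp only [hD, hQg, hlam']
    rw [sum_sum_mul_mul_log_mul _ _ (hp' ▸ sum_softmax _) (sum_softmax _), hsys,
      re_trace_mul_gibbs_of_eigenvectors hf hfeig, hp', sum_softmax_mul_log_softmax,
      sum_softmax_mul_log_softmax, ← hZt, ← hZB, Real.log_mul hZStpos.ne' (hZB ▸ sum_exp_pos _).ne']
    simp only [mul_neg, Finset.sum_neg_distrib, mul_left_comm _ β, ← Finset.mul_sum]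
    ring
  have hwork : ∑ i, (Real.exp (-(β * ε i)) / Zpart β HS0) * Wg i
      = ∑ i, softmax (fun i => -(β * ε i)) i * (E i - ε i) - Qg := by
    have hg : ∀ i, Real.exp (-(β * ε i)) / Zpart β HS0 = softmax (fun i => -(β * ε i)) i :=
      fun i => by rw [hZ0]; rfl
    simp only [hg, hWg, mul_sub, Finset.sum_sub_distrib, ← Finset.sum_mul, sum_softmax, one_mul]
  have hjensen := hZ0 ▸ hZt ▸ inv_mul_log_sum_exp_sub_le hβ ε E
  rw [hwork, hΔF, hD', Real.log_div hZStpos.ne' (hZ0 ▸ sum_exp_pos _).ne', ge_iff_le]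
  linear_combination hjensen - Qg * inv_mul_cancel₀ hβ.ne'

theorem max_guessed_work_composite
    (n m : ℕ) (hn : 1 ≤ n) (hm : 1 ≤ m)
    (β : ℝ) (hβ : 0 < β)
    (HS0 HSt : Matrix (Fin n) (Fin n) ℂ)
    (hHS0 : HS0.IsHermitian) (hHSt : HSt.IsHermitian)
    (HB : Matrix (Fin m) (Fin m) ℂ) (hHB : HB.IsHermitian)
    (e : Fin n → Fin n → ℂ) (ε : Fin n → ℝ)
    (he : ∀ i i', ∑ x, (starRingEnd ℂ) (e i x) * e i' x = if i = i' then 1 else 0)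
    (heig : ∀ i, HS0 *ᵥ e i = (ε i : ℂ) • e i)
    (f : Fin m → Fin m → ℂ) (q : Fin m → ℝ)
    (hf : ∀ j j', ∑ x, (starRingEnd ℂ) (f j x) * f j' x = if j = j' then 1 else 0)
    (hfeig : ∀ j, HB *ᵥ f j = (q j : ℂ) • f j)
    (U : Matrix (Fin n × Fin m) (Fin n × Fin m) ℂ)
    (hU : U ∈ Matrix.unitaryGroup (Fin n × Fin m) ℂ)
    (E : Fin n → ℝ)
    (hE : ∀ i, E i = ((HSt * channel U (gibbs β HB) (outer (e i))).trace).re)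
    (Zt : ℝ) (hZt : Zt = ∑ i, Real.exp (-(β * E i)))
    (p : Fin n → ℝ) (hp : ∀ i, p i = Real.exp (-(β * E i)) / Zt)
    (Θ : Matrix (Fin n × Fin m) (Fin n × Fin m) ℂ)
    (hΘ : Θ = ∑ i, (p i : ℂ) • (U * (outer (e i) ⊗ₖ gibbs β HB) * Uᴴ))
    (lam : Fin n → Fin m → ℝ)
    (hlam : ∀ i j, lam i j = p i * Real.exp (-(β * q j)) / Zpart β HB)
    (Qg : ℝ)
    (hQg : Qg = ((HB * gibbs β HB).trace).re
      - ((((1 : Matrix (Fin n) (Fin n) ℂ) ⊗ₖ HB) * Θ).trace).re)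
    (Wg : Fin n → ℝ) (hWg : ∀ i, Wg i = (E i - ε i) - Qg)
    (D : ℝ)
    (hD : D = (∑ i, ∑ j, lam i j * Real.log (lam i j))
      + β * (((HSt ⊗ₖ (1 : Matrix (Fin m) (Fin m) ℂ)) * Θ).trace).re
      + β * ((((1 : Matrix (Fin n) (Fin n) ℂ) ⊗ₖ HB) * Θ).trace).re
      + Real.log (Zpart β HSt * Zpart β HB))
    (ΔF : ℝ) (hΔF : ΔF = -(β⁻¹ * Real.log (Zpart β HSt / Zpart β HS0))) :
    ∑ i, (Real.exp (-(β * ε i)) / Zpart β HS0) * Wg i ≥ ΔF + β⁻¹ * D :=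
  max_guessed_work_composite_general n m hn hm β hβ HS0 HSt hHSt HB e ε he heig f q hf hfeig U E hE
    Zt hZt p hp Θ hΘ lam hlam Qg hQg Wg hWg D hD ΔF hΔF
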